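/- Let Z be the localization of V along an ambidextrous natural transformation T, with canonical functor I : V → Z. If G : V → C is any functor to another category such that G(T_M) is an isomorphism for every object M, then there is a unique functor G' : Z → C with G' ∘ I = G. -/

import Mathlib

open CategoryTheory

namespace Stmt5

variable {V : Type*} [Category V]

/-- Iterates `F^p` of an endofunctor. -/
def Fpow (F : V ⥤ V) : ℕ → (V ⥤ V)
  | 0 => 𝟭 V
  | n + 1 => F ⋙ Fpow F n

lemma Fpow_obj_add (F : V ⥤ V) (p q : ℕ) (M : V) :
    (Fpow F (p + q)).obj M = (Fpow F p).obj ((Fpow F q).obj M) := by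
  induction q generalizing M with
  | zero => rfl
  | succ q ih => exact ih (F.obj M)

/-- Iterates `T^p : F^p ⟶ 𝟭`. -/
def Tpow (F : V ⥤ V) (T : F ⟶ 𝟭 V) : ∀ (p : ℕ) (M : V), (Fpow F p).obj M ⟶ M
  | 0, M => 𝟙 M
  | p + 1, M => Tpow F T p (F.obj M) ≫ T.app M

/-- The connecting map of the direct system: extend `f : F^p(M) ⟶ N` to `F^{p+r}(M) ⟶ N`
by precomposing with `F^p(T^r_M)`. -/
def ext (F : V ⥤ V) (T : F ⟶ 𝟭 V) {M N : V} (p r : ℕ) (f : (Fpow F p).obj M ⟶ N) :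
    (Fpow F (p + r)).obj M ⟶ N :=
  eqToHom (Fpow_obj_add F p r M) ≫ (Fpow F p).map (Tpow F T r M) ≫ f

/-- The relation generating the colimit `Hom_Z(M,N) = colim_p Hom_V(F^p(M), N)`. -/
def ZHomRel (F : V ⥤ V) (T : F ⟶ 𝟭 V) (M N : V) :
    (Σ p : ℕ, (Fpow F p).obj M ⟶ N) → (Σ p : ℕ, (Fpow F p).obj M ⟶ N) → Prop :=
  fun x y => ∃ r : ℕ, y = ⟨x.1 + r, ext F T x.1 r x.2⟩

/-- `Hom_Z(M,N) = colim_p Hom_V(F^p(M), N)`, morphisms in the localization of `V` along `T`. -/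
def ZHom (F : V ⥤ V) (T : F ⟶ 𝟭 V) (M N : V) : Type _ :=
  Quot (ZHomRel F T M N)

/-- Composition at the level of representatives: for `f : F^p(M) ⟶ N` and `g : F^q(N) ⟶ O`,
the composite is `g ∘ F^q(f) : F^{p+q}(M) ⟶ O`. -/
def zcomp (F : V ⥤ V) {M N O : V} {p q : ℕ}
    (f : (Fpow F p).obj M ⟶ N) (g : (Fpow F q).obj N ⟶ O) :
    (Fpow F (p + q)).obj M ⟶ O :=
  eqToHom (by rw [Nat.add_comm]; exact Fpow_obj_add F q p M) ≫ (Fpow F q).map f ≫ g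


section Aux

variable (F : V ⥤ V) (T : F ⟶ 𝟭 V)

lemma Tpow_natural : ∀ (p : ℕ) {M N : V} (f : M ⟶ N),
    (Fpow F p).map f ≫ Tpow F T p N = Tpow F T p M ≫ f
  | 0, M, N, f => by
      simp [Fpow, Tpow]
  | p + 1, M, N, f => by
      show (Fpow F p).map (F.map f) ≫ Tpow F T p (F.obj N) ≫ T.app N
          = (Tpow F T p (F.obj M) ≫ T.app M) ≫ f
      rw [← Category.assoc, Tpow_natural p (F.map f), Category.assoc, Category.assoc]
      congr 1
      exact T.naturality f

lemma Tpow_split : ∀ (p q : ℕ) (M : V),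
    Tpow F T (p + q) M =
      eqToHom (Fpow_obj_add F p q M) ≫ (Fpow F p).map (Tpow F T q M) ≫ Tpow F T p M
  | p, 0, M => by
      show Tpow F T p M = eqToHom (Fpow_obj_add F p 0 M) ≫ (Fpow F p).map (𝟙 M) ≫ Tpow F T p M
      erw [show (Fpow F p).map (𝟙 M) = 𝟙 ((Fpow F p).obj M) from (Fpow F p).map_id M,
        show eqToHom (Fpow_obj_add F p 0 M) = 𝟙 ((Fpow F p).obj M) from eqToHom_refl _ rfl]
      exact ((Category.id_comp (𝟙 _ ≫ Tpow F T p M)).trans (Category.id_comp (Tpow F T p M))).symm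
  | p, q + 1, M => by
      show Tpow F T (p + q) (F.obj M) ≫ T.app M = _
      rw [Tpow_split p q (F.obj M)]
      show _ = eqToHom _ ≫ (Fpow F p).map (Tpow F T q (F.obj M) ≫ T.app M) ≫ Tpow F T p M
      rw [Functor.map_comp]
      simp only [Category.assoc]
      congr 2
      exact (Tpow_natural F T p (T.app M)).symm

end Aux

section Iso

variable (F : V ⥤ V) (T : F ⟶ 𝟭 V) {C : Type*} [Category C] (G : V ⥤ C)

lemma isoA (amb : ∀ M : V, T.app (F.obj M) = F.map (T.app M))
    (hG : ∀ M : V, IsIso (G.map (T.app M))) :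
    ∀ (k : ℕ) (M : V), IsIso (G.map ((Fpow F k).map (T.app M)))
  | 0, M => hG M
  | k + 1, M => by
      show IsIso (G.map ((Fpow F k).map (F.map (T.app M))))
      rw [← amb M]
      exact isoA amb hG k (F.obj M)

lemma isoB (amb : ∀ M : V, T.app (F.obj M) = F.map (T.app M))
    (hG : ∀ M : V, IsIso (G.map (T.app M))) :
    ∀ (q k : ℕ) (M : V), IsIso (G.map ((Fpow F k).map (Tpow F T q M)))
  | 0, k, M => by
      show IsIso (G.map ((Fpow F k).map (𝟙 M)))
      rw [show (Fpow F k).map (𝟙 M) = 𝟙 _ from (Fpow F k).map_id M]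
      rw [show G.map (𝟙 ((Fpow F k).obj M)) = 𝟙 _ from G.map_id _]
      infer_instance
  | q + 1, k, M => by
      show IsIso (G.map ((Fpow F k).map (Tpow F T q (F.obj M) ≫ T.app M)))
      rw [Functor.map_comp, G.map_comp]
      haveI := isoB amb hG q k (F.obj M)
      haveI := isoA F T G amb hG k M
      infer_instance

lemma isoC (amb : ∀ M : V, T.app (F.obj M) = F.map (T.app M))
    (hG : ∀ M : V, IsIso (G.map (T.app M))) (p : ℕ) (M : V) :
    IsIso (G.map (Tpow F T p M)) :=
  isoB F T G amb hG p 0 M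

end Iso

section Main

variable (F : V ⥤ V) (T : F ⟶ 𝟭 V) {C : Type*} [Category C] (G : V ⥤ C)
  (amb : ∀ M : V, T.app (F.obj M) = F.map (T.app M))
  (hG : ∀ M : V, IsIso (G.map (T.app M)))

/-- The candidate action on representatives. -/
noncomputable def Gmor (M N : V) (p : ℕ) (f : (Fpow F p).obj M ⟶ N) : G.obj M ⟶ G.obj N :=
  haveI := isoC F T G amb hG p M
  inv (G.map (Tpow F T p M)) ≫ G.map f

lemma Gmor_sound (M N : V) (p r : ℕ) (f : (Fpow F p).obj M ⟶ N) :
    Gmor F T G amb hG M N (p + r) (ext F T p r f) = Gmor F T G amb hG M N p f := by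
  haveI := isoC F T G amb hG (p + r) M
  haveI := isoC F T G amb hG p M
  haveI := isoB F T G amb hG r p M
  unfold Gmor ext
  rw [IsIso.inv_comp_eq, Tpow_split F T p r M]
  simp [G.map_comp, eqToHom_map]

lemma Gmor_zero (M N : V) (f : M ⟶ N) :
    Gmor F T G amb hG M N 0 f = G.map f := by
  haveI := isoC F T G amb hG 0 M
  unfold Gmor
  rw [IsIso.inv_comp_eq]
  erw [show Tpow F T 0 M = 𝟙 M from rfl,
    show G.map (𝟙 M) = 𝟙 (G.obj M) from G.map_id M]
  exact (Category.id_comp (G.map f)).symm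

lemma Tpow_congr {p p' : ℕ} (h : p = p') (M : V) :
    Tpow F T p M =
      eqToHom (by rw [h]) ≫ Tpow F T p' M := by
  subst h
  rw [show eqToHom _ = 𝟙 ((Fpow F p).obj M) from eqToHom_refl _ rfl,
    Category.id_comp]

lemma Tpow_split' (p q : ℕ) (M : V) :
    Tpow F T (p + q) M =
      eqToHom (by rw [Nat.add_comm]; exact Fpow_obj_add F q p M) ≫
        (Fpow F q).map (Tpow F T p M) ≫ Tpow F T q M := by
  rw [Tpow_congr F T (Nat.add_comm p q) M, Tpow_split F T q p M, ← Category.assoc,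
    eqToHom_trans]

lemma Gmor_comp (M N O : V) (p q : ℕ) (f : (Fpow F p).obj M ⟶ N)
    (g : (Fpow F q).obj N ⟶ O) :
    Gmor F T G amb hG M O (p + q) (zcomp F f g) =
      Gmor F T G amb hG M N p f ≫ Gmor F T G amb hG N O q g := by
  haveI := isoC F T G amb hG (p + q) M
  haveI := isoC F T G amb hG p M
  haveI := isoC F T G amb hG q N
  have h1 : G.map ((Fpow F q).map f) ≫ G.map (Tpow F T q N)
      = G.map (Tpow F T q ((Fpow F p).obj M)) ≫ G.map f := by
    rw [← G.map_comp, ← G.map_comp, Tpow_natural]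
  have h2 : G.map ((Fpow F q).map (Tpow F T p M)) ≫ G.map (Tpow F T q M)
      = G.map (Tpow F T q ((Fpow F p).obj M)) ≫ G.map (Tpow F T p M) := by
    rw [← G.map_comp, ← G.map_comp, Tpow_natural]
  unfold Gmor zcomp
  rw [IsIso.inv_comp_eq, Tpow_split' F T p q M]
  simp only [G.map_comp, Category.assoc]
  congr 1
  rw [show G.map ((Fpow F q).map f)
      = (G.map (Tpow F T q ((Fpow F p).obj M)) ≫ G.map f) ≫ inv (G.map (Tpow F T q N)) from
    by rw [IsIso.eq_comp_inv]; exact h1]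
  conv_rhs => rw [← Category.assoc, h2]
  simp

lemma sigma_eq (F : V ⥤ V) {M N : V} {p p' : ℕ} (h : p = p')
    (f : (Fpow F p).obj M ⟶ N) (f' : (Fpow F p').obj M ⟶ N)
    (hf : f = eqToHom (by rw [h]) ≫ f') :
    (⟨p, f⟩ : Σ p : ℕ, (Fpow F p).obj M ⟶ N) = ⟨p', f'⟩ := by
  subst h
  rw [hf, show eqToHom _ = 𝟙 ((Fpow F p).obj M) from eqToHom_refl _ rfl,
    Category.id_comp]

end Main

/-- universal property of the localization `Z` of `V` along an ambidextrous
natural transformation `T`. If `G : V ⥤ C` sends every component `T_M` to an isomorphism,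
then there is a unique factorization `G' : Z ⥤ C` of `G` through the canonical functor
`I : V ⥤ Z`. Since `Z` has the same objects as `V`, `G'` is encoded by its action on
morphisms: a family of maps `ZHom M N → (G(M) ⟶ G(N))` which agrees with `G` on the image
of `I` (the classes `⟨0, x⟩`) and is functorial for the composition `zcomp` of `Z`. -/
theorem Z_universal_property {C : Type*} [Category C] (F : V ⥤ V) (T : F ⟶ 𝟭 V)
    (amb : ∀ M : V, T.app (F.obj M) = F.map (T.app M))
    (G : V ⥤ C) (hG : ∀ M : V, IsIso (G.map (T.app M))) :
    ∃! G' : ∀ M N : V, ZHom F T M N → (G.obj M ⟶ G.obj N),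
      (∀ (M N : V) (x : M ⟶ N), G' M N (Quot.mk _ ⟨0, x⟩) = G.map x) ∧
      (∀ (M N O : V) (p q : ℕ) (f : (Fpow F p).obj M ⟶ N) (g : (Fpow F q).obj N ⟶ O),
          G' M O (Quot.mk _ ⟨p + q, zcomp F f g⟩) =
            G' M N (Quot.mk _ ⟨p, f⟩) ≫ G' N O (Quot.mk _ ⟨q, g⟩)) := by
  classical
  refine ⟨fun M N => Quot.lift (fun x => Gmor F T G amb hG M N x.1 x.2) ?_, ⟨?_, ?_⟩, ?_⟩
  · rintro ⟨p, f⟩ y ⟨r, rfl⟩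
    exact (Gmor_sound F T G amb hG M N p r f).symm
  · intro M N x
    exact Gmor_zero F T G amb hG M N x
  · intro M N O p q f g
    exact Gmor_comp F T G amb hG M N O p q f g
  · rintro G'' ⟨hI, hC⟩
    funext M N x
    induction x using Quot.ind with
    | _ a =>
    obtain ⟨p, f⟩ := a
    show G'' M N (Quot.mk _ ⟨p, f⟩) = Gmor F T G amb hG M N p f
    haveI := isoC F T G amb hG p M
    -- Step A : value on ⟨p, 𝟙⟩ is inv (G.map (Tpow p M))
    have eid : (Quot.mk (ZHomRel F T M M) ⟨p + 0, zcomp F (𝟙 ((Fpow F p).obj M)) (Tpow F T p M)⟩)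
        = Quot.mk _ ⟨0, 𝟙 M⟩ := by
      refine Eq.trans (congrArg (Quot.mk _) (sigma_eq F (by omega) _ (ext F T 0 p (𝟙 M)) ?_))
        (Quot.sound ⟨p, rfl⟩).symm
      simp [zcomp, ext, Fpow]
      exact (eqToHom_trans_assoc _ _ _).symm
    have hA : G'' M ((Fpow F p).obj M) (Quot.mk _ ⟨p, 𝟙 ((Fpow F p).obj M)⟩) ≫ G.map (Tpow F T p M) = 𝟙 (G.obj M) := by
      rw [← hI ((Fpow F p).obj M) M (Tpow F T p M), ← hC M ((Fpow F p).obj M) M p 0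
        (𝟙 ((Fpow F p).obj M)) (Tpow F T p M), eid, hI]
      exact G.map_id M
    have hA' : G'' M ((Fpow F p).obj M) (Quot.mk _ ⟨p, 𝟙 ((Fpow F p).obj M)⟩) = inv (G.map (Tpow F T p M)) := by
      exact IsIso.eq_inv_of_inv_hom_id hA
    -- Step B : decompose ⟨p, f⟩
    have ef : (Quot.mk (ZHomRel F T M N) ⟨p + 0, zcomp F (𝟙 ((Fpow F p).obj M)) f⟩)
        = Quot.mk _ ⟨p, f⟩ := by
      refine congrArg (Quot.mk _) (sigma_eq F (by omega) _ f ?_)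
      simp [zcomp, Fpow]
      exact Category.id_comp f
    rw [← ef, hC M ((Fpow F p).obj M) N p 0 (𝟙 ((Fpow F p).obj M)) f, hA', hI]
    rfl


end Stmt5
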